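/- arXiv:1601.07505 — 7 statements merged into one kernel-verified Lean document; each statement's English description precedes it below -/
import Mathlib

section
/- Suppose γR/C < 1 (region R1). Then the all-zero effort profile λ* = (0,…,0) is a pure strategy Nash equilibrium, and it is the unique one: every PSNE equals (0,…,0). -/
open Finset

/-- Utility of agent `i` when the task queue is under-loaded (Case 1):
`u_{i,1}(λ) = λγR·λ_i/(∑_k λ_k) + λR·(∑_{j∈T_i\{i}} δ_{ij} λ_j)/(∑_k λ_k) − C·λ_i`.
Since `δ i j = 0` whenever `j` is not a strict descendant of `i` (and `j ≠ i`),
the sum over strict descendants equals the sum over `univ.erase i`.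
(Real division by zero is zero in Lean, matching the stated convention.) -/
noncomputable def u1 {n : ℕ} (lam R gam C : ℝ) (delta : Fin n → Fin n → ℝ)
    (x : Fin n → ℝ) (i : Fin n) : ℝ :=
  lam * gam * R * x i / (∑ k, x k)
    + lam * R * (∑ j ∈ univ.erase i, delta i j * x j) / (∑ k, x k)
    - C * x i

/-- Utility of agent `i` when the task queue is over-loaded (Case 2):
`u_{i,2}(λ) = γR·λ_i + λR·∑_{j∈T_i\{i}} δ_{ij} λ_j − C·λ_i`. -/
noncomputable def u2 {n : ℕ} (lam R gam C : ℝ) (delta : Fin n → Fin n → ℝ)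
    (x : Fin n → ℝ) (i : Fin n) : ℝ :=
  gam * R * x i + lam * R * (∑ j ∈ univ.erase i, delta i j * x j) - C * x i

/-- Utility of agent `i`: `u_{i,1}` if `∑_k λ_k > λ`, `u_{i,2}` if `∑_k λ_k ≤ λ`. -/
noncomputable def u {n : ℕ} (lam R gam C : ℝ) (delta : Fin n → Fin n → ℝ)
    (x : Fin n → ℝ) (i : Fin n) : ℝ :=
  if lam < ∑ k, x k then u1 lam R gam C delta x i else u2 lam R gam C delta x i

/-- A nonnegative effort profile `x` is a pure strategy Nash equilibrium:
for every agent `i` and every deviation `y ≥ 0`,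
`u_i(λ_i*, λ_{−i}*) ≥ u_i(y, λ_{−i}*)`. -/
def IsPSNE {n : ℕ} (lam R gam C : ℝ) (delta : Fin n → Fin n → ℝ)
    (x : Fin n → ℝ) : Prop :=
  (∀ i, 0 ≤ x i) ∧
  ∀ (i : Fin n) (y : ℝ), 0 ≤ y →
    u lam R gam C delta (Function.update x i y) i ≤ u lam R gam C delta x i

/-- Suppose `γR/C < 1` (region R1). Then the all-zero effort profile is a PSNE,
and every PSNE equals `(0,…,0)`. -/
theorem stmt3
    (n : ℕ) (hn : 1 ≤ n)
    (lam R gam C : ℝ) (hlam : 0 < lam) (hR : 0 < R)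
    (hgam0 : 0 < gam) (hgam1 : gam < 1) (hC : 0 < C)
    -- the reward sharing matrix Δ
    (delta : Fin n → Fin n → ℝ)
    (hd0 : ∀ i j, 0 ≤ delta i j) (hd1 : ∀ i j, delta i j < 1)
    (hdiag : ∀ i, delta i i = gam)
    (hcol : ∀ j, ∑ k, delta k j ≤ 1)
    -- `desc i j` means `j` is a strict descendant of `i` in the rooted tree `T`,
    -- i.e. `j ∈ T_i \ {i}`; it is a transitive irreflexive relation on a finite type
    (desc : Fin n → Fin n → Prop)
    (hirr : ∀ i, ¬ desc i i)
    (htrans : ∀ i j k, desc i j → desc j k → desc i k)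
    -- `δ_{ij} = 0` whenever `j ∉ T_i`
    (hsupp : ∀ i j, i ≠ j → ¬ desc i j → delta i j = 0)
    (hR1 : gam * R / C < 1) :
    IsPSNE lam R gam C delta (fun _ => 0) ∧
      ∀ x : Fin n → ℝ, IsPSNE lam R gam C delta x → x = fun _ => 0 := by
  have hgRC : gam * R < C := by
    have := (div_lt_one hC).mp hR1; linarith
  constructor
  · refine ⟨fun i => le_refl 0, ?_⟩
    intro i y hy
    have hsum0 : (∑ k, (fun _ : Fin n => (0:ℝ)) k) = 0 := by simp
    have hrhs : u lam R gam C delta (fun _ => 0) i = 0 := by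
      rw [u, hsum0, if_neg (by linarith)]
      simp [u2]
    rw [hrhs]
    have hsumy : (∑ k, Function.update (fun _ : Fin n => (0:ℝ)) i y k) = y := by
      rw [Finset.sum_update_of_mem (Finset.mem_univ i)]
      simp
    have herase : (∑ j ∈ univ.erase i,
        delta i j * Function.update (fun _ : Fin n => (0:ℝ)) i y j) = 0 := by
      apply Finset.sum_eq_zero
      intro j hj
      rw [Function.update_of_ne (Finset.ne_of_mem_erase hj)]
      ring
    rw [u, hsumy]
    by_cases hcase : lam < y
    · rw [if_pos hcase, u1, hsumy, herase, Function.update_self]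
      have hy0 : y ≠ 0 := by linarith
      rw [mul_div_assoc, div_self hy0]
      have h0 : lam * R * 0 / y = 0 := by simp
      have : gam * R * lam < C * y := by nlinarith
      linarith
    · rw [if_neg hcase, u2, herase, Function.update_self]
      nlinarith
  · intro x hx
    by_contra hne
    have hex : ∃ i, 0 < x i := by
      by_contra hall
      push_neg at hall
      apply hne
      funext i
      exact le_antisymm (hall i) (hx.1 i)
    -- pick a desc-maximal element among agents with positive effort
    have hwf : WellFounded (fun a b : Fin n => desc b a) := by
      have h1 : IsTrans (Fin n) (fun a b : Fin n => desc b a) :=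
        ⟨fun a b c hab hbc => htrans c b a hbc hab⟩
      have h2 : IsIrrefl (Fin n) (fun a b : Fin n => desc b a) := ⟨fun a => hirr a⟩
      exact Finite.wellFounded_of_trans_of_irrefl _
    obtain ⟨i, hi, hmax⟩ := hwf.has_min {j | 0 < x j} hex
    have hxi : 0 < x i := hi
    have hDi : (∑ j ∈ univ.erase i, delta i j * x j) = 0 := by
      apply Finset.sum_eq_zero
      intro j hj
      have hji : j ≠ i := Finset.ne_of_mem_erase hj
      by_cases hd : desc i j
      · have hxj : x j = 0 := by
          by_contra h0
          have : 0 < x j := lt_of_le_of_ne (hx.1 j) (Ne.symm h0)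
          exact hmax j this hd
        rw [hxj]; ring
      · rw [hsupp i j (Ne.symm hji) hd]; ring
    set S := ∑ k, x k with hS
    have hSi : x i ≤ S := Finset.single_le_sum (fun k _ => hx.1 k) (Finset.mem_univ i)
    have hSpos : 0 < S := lt_of_lt_of_le hi hSi
    -- utility of i at x is negative
    have hux : u lam R gam C delta x i < 0 := by
      rw [u, ← hS]
      by_cases hcase : lam < S
      · rw [if_pos hcase, u1, ← hS, hDi]
        have h1 : lam * gam * R * x i / S < C * x i := by
          rw [div_lt_iff₀ hSpos]
          have h2 : lam * gam * R < C * S := by nlinarith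
          nlinarith [mul_pos (sub_pos.mpr h2) hxi]
        have h3 : lam * R * 0 / S = 0 := by simp
        rw [h3]
        linarith
      · rw [if_neg hcase, u2, hDi]
        nlinarith [mul_pos hxi (sub_pos.mpr hgRC)]
    -- utility of i when deviating to 0 is 0
    have hdev : u lam R gam C delta (Function.update x i 0) i = 0 := by
      have herase : (∑ j ∈ univ.erase i, delta i j * Function.update x i 0 j) = 0 := by
        rw [← hDi]
        apply Finset.sum_congr rfl
        intro j hj
        rw [Function.update_of_ne (Finset.ne_of_mem_erase hj)]
      rw [u]
      by_cases hcase : lam < ∑ k, Function.update x i 0 k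
      · rw [if_pos hcase, u1, herase, Function.update_self]
        simp
      · rw [if_neg hcase, u2, herase, Function.update_self]
        ring
    have := hx.2 i 0 le_rfl
    rw [hdev] at this
    linarith
end

section
/- Suppose γR ≤ C. Then no pure strategy Nash equilibrium λ* satisfies ∑_{j∈N} λ_j* > λ (i.e., no PSNE lies in Zone 4). -/
open Finset

/-- Suppose `γR ≤ C`. Then no PSNE satisfies `∑_j λ_j* > λ`
(no PSNE lies in Zone 4). -/
theorem stmt5
    (n : ℕ) (hn : 1 ≤ n)
    (lam R gam C : ℝ) (hlam : 0 < lam) (hR : 0 < R)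
    (hgam0 : 0 < gam) (hgam1 : gam < 1) (hC : 0 < C)
    -- the reward sharing matrix Δ
    (delta : Fin n → Fin n → ℝ)
    (hd0 : ∀ i j, 0 ≤ delta i j) (hd1 : ∀ i j, delta i j < 1)
    (hdiag : ∀ i, delta i i = gam)
    (hcol : ∀ j, ∑ k, delta k j ≤ 1)
    -- `desc i j` means `j` is a strict descendant of `i` in the rooted tree `T`,
    -- i.e. `j ∈ T_i \ {i}`; it is a transitive irreflexive relation on a finite type
    (desc : Fin n → Fin n → Prop)
    (hirr : ∀ i, ¬ desc i i)
    (htrans : ∀ i j k, desc i j → desc j k → desc i k)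
    -- `δ_{ij} = 0` whenever `j ∉ T_i`
    (hsupp : ∀ i j, i ≠ j → ¬ desc i j → delta i j = 0)
    (h : gam * R ≤ C)
    (x : Fin n → ℝ) (hx : IsPSNE lam R gam C delta x) :
    ¬ (lam < ∑ j, x j) := by
  intro hT
  obtain ⟨hxnn, hne⟩ := hx
  have hTpos : 0 < ∑ j, x j := hlam.trans hT
  have hex : ∃ j, 0 < x j := by
    by_contra hc
    push_neg at hc
    have : ∑ j, x j = 0 := Finset.sum_eq_zero fun j _ => le_antisymm (hc j) (hxnn j)
    linarith
  haveI : IsTrans (Fin n) (fun a b => desc b a) := ⟨fun a b c h1 h2 => htrans c b a h2 h1⟩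
  haveI : IsIrrefl (Fin n) (fun a b => desc b a) := ⟨hirr⟩
  have wf := Finite.wellFounded_of_trans_of_irrefl (fun a b : Fin n => desc b a)
  obtain ⟨j0, hj0⟩ := hex
  obtain ⟨i, hi, hmin⟩ := wf.has_min {j | 0 < x j} ⟨j0, hj0⟩
  have hi : 0 < x i := hi
  have hSsum : ∑ j ∈ univ.erase i, delta i j * x j = 0 := by
    refine Finset.sum_eq_zero fun j hj => ?_
    have hji : j ≠ i := (Finset.mem_erase.mp hj).1
    by_cases hd : desc i j
    · have hxj : x j = 0 :=
        le_antisymm (not_lt.mp fun hp => hmin j hp hd) (hxnn j)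
      rw [hxj, mul_zero]
    · rw [hsupp i j (Ne.symm hji) hd, zero_mul]
  have hdev := hne i 0 le_rfl
  have hx'i : Function.update x i 0 i = 0 := Function.update_self i 0 x
  have hS' : ∑ j ∈ univ.erase i, delta i j * Function.update x i 0 j = 0 := by
    rw [Finset.sum_congr rfl fun j hj => by
      rw [Function.update_of_ne (Finset.mem_erase.mp hj).1]]
    exact hSsum
  have hu' : u lam R gam C delta (Function.update x i 0) i = 0 := by
    unfold u u1 u2
    split <;> simp [hx'i, hS']
  have hu : u lam R gam C delta x i =
      lam * gam * R * x i / (∑ k, x k) - C * x i := by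
    unfold u u1
    rw [if_pos hT, hSsum]
    simp
  rw [hu', hu] at hdev
  have h1 : lam * gam * R * x i / (∑ k, x k) < gam * R * x i := by
    rw [div_lt_iff₀ hTpos]
    nlinarith [mul_pos (show (0:ℝ) < gam * R * x i by positivity) (sub_pos.mpr hT)]
  nlinarith [mul_le_mul_of_nonneg_right h (le_of_lt hi)]
end

section
/- Let y ≥ 0 and suppose the nonnegative profile λ satisfies λ_i = max{0, y − ∑_{j∈T_i\{i}} δ_{ij} λ_j} for every i ∈ N. Then λ_i = y·f(T_i,Δ) for every i ∈ N. -/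
open Finset


/-- Let `y ≥ 0` and suppose the nonnegative profile `λ` satisfies
`λ_i = max{0, y − ∑_{j∈T_i\{i}} δ_{ij} λ_j}` for every `i`. Then `λ_i = y·f(T_i,Δ)`
for every `i`. -/
theorem stmt7
    (n : ℕ) (hn : 1 ≤ n)
    -- the reward sharing matrix Δ
    (delta : Fin n → Fin n → ℝ)
    (hd0 : ∀ i j, 0 ≤ delta i j) (hd1 : ∀ i j, delta i j < 1)
    -- `desc i j` means `j` is a strict descendant of `i` in the rooted tree `T`,
    -- i.e. `j ∈ T_i \ {i}`; it is a transitive irreflexive relation on a finite type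
    (desc : Fin n → Fin n → Prop)
    (hirr : ∀ i, ¬ desc i i)
    (htrans : ∀ i j k, desc i j → desc j k → desc i k)
    -- `δ_{ij} = 0` whenever `j ∉ T_i`
    (hsupp : ∀ i j, i ≠ j → ¬ desc i j → delta i j = 0)
    -- the effort sharing function: `f i = f(T_i, Δ) = max{0, 1 − ∑_{j∈T_i\{i}} δ_{ij}·f(T_j,Δ)}`
    (f : Fin n → ℝ)
    (hf : ∀ i, f i = max 0 (1 - ∑ j ∈ univ.erase i, delta i j * f j))
    (y : ℝ) (hy : 0 ≤ y)
    (x : Fin n → ℝ) (hx0 : ∀ i, 0 ≤ x i)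
    (hx : ∀ i, x i = max 0 (y - ∑ j ∈ univ.erase i, delta i j * x j)) :
    ∀ i, x i = y * f i := by
  have hwf : WellFounded (fun j i => desc i j) := by
    have : IsTrans (Fin n) (fun j i => desc i j) :=
      ⟨fun a b c h1 h2 => htrans c b a h2 h1⟩
    have : IsIrrefl (Fin n) (fun j i => desc i j) := ⟨fun a => hirr a⟩
    exact Finite.wellFounded_of_trans_of_irrefl _
  intro i
  induction i using hwf.induction with
  | _ i ih =>
    have hsum : ∑ j ∈ univ.erase i, delta i j * x j
        = ∑ j ∈ univ.erase i, delta i j * (y * f j) := by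
      refine Finset.sum_congr rfl fun j hj => ?_
      rcases Classical.em (desc i j) with h | h
      · rw [ih j h]
      · rw [hsupp i j (Ne.symm (Finset.ne_of_mem_erase hj)) h]; ring
    rw [hx i, hsum, hf i]
    rw [mul_max_of_nonneg _ _ hy, mul_zero, mul_sub, mul_one,
      Finset.mul_sum]
    congr 2
    refine Finset.sum_congr rfl fun j hj => ?_
    ring
end

section
/- Suppose F > 1 and 1 < γR/C ≤ F/(F−1) (region R3). Then the set Z3 is nonempty: there exists a nonnegative effort profile λ with ∑_{j∈N} λ_j = λ and λ_i + ∑_{j∈T_i\{i}} δ_{ij} λ_j ≥ λ·(1 − C/(γR)) for every i ∈ N. -/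
open Finset


/-- Suppose `F > 1` and `1 < γR/C ≤ F/(F−1)` (region R3). Then `Z3` is
nonempty: there exists a nonnegative effort profile `λ` with `∑_j λ_j = λ` and
`λ_i + ∑_{j∈T_i\{i}} δ_{ij} λ_j ≥ λ·(1 − C/(γR))` for every `i`. -/
theorem stmt12
    (n : ℕ) (hn : 1 ≤ n)
    (lam R gam C : ℝ) (hlam : 0 < lam) (hR : 0 < R)
    (hgam0 : 0 < gam) (hgam1 : gam < 1) (hC : 0 < C)
    -- the reward sharing matrix Δ
    (delta : Fin n → Fin n → ℝ)
    (hd0 : ∀ i j, 0 ≤ delta i j) (hd1 : ∀ i j, delta i j < 1)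
    (hdiag : ∀ i, delta i i = gam)
    (hcol : ∀ j, ∑ k, delta k j ≤ 1)
    -- `desc i j` means `j` is a strict descendant of `i` in the rooted tree `T`,
    -- i.e. `j ∈ T_i \ {i}`; it is a transitive irreflexive relation on a finite type
    (desc : Fin n → Fin n → Prop)
    (hirr : ∀ i, ¬ desc i i)
    (htrans : ∀ i j k, desc i j → desc j k → desc i k)
    -- `δ_{ij} = 0` whenever `j ∉ T_i`
    (hsupp : ∀ i j, i ≠ j → ¬ desc i j → delta i j = 0)
    -- the effort sharing function: `f i = f(T_i, Δ) = max{0, 1 − ∑_{j∈T_i\{i}} δ_{ij}·f(T_j,Δ)}`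
    (f : Fin n → ℝ)
    (hf : ∀ i, f i = max 0 (1 - ∑ j ∈ univ.erase i, delta i j * f j))
    (hF : 1 < ∑ j, f j)
    (hlow : 1 < gam * R / C)
    (hhigh : gam * R / C ≤ (∑ j, f j) / ((∑ j, f j) - 1)) :
    ∃ x : Fin n → ℝ, (∀ i, 0 ≤ x i) ∧ (∑ j, x j = lam) ∧
      ∀ i, lam * (1 - C / (gam * R))
            ≤ x i + ∑ j ∈ univ.erase i, delta i j * x j := by

  set F : ℝ := ∑ j, f j with hFdef
  have hFpos : 0 < F := lt_trans one_pos hF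
  have fnn : ∀ j, 0 ≤ f j := fun j => by rw [hf]; exact le_max_left _ _
  have key : ∀ i, 1 - ∑ j ∈ univ.erase i, delta i j * f j ≤ f i := fun i => by
    rw [hf]; exact le_max_right _ _
  have hA : 0 < gam * R := mul_pos hgam0 hR
  -- main scalar inequality: lam * (1 - C/(gam*R)) ≤ lam / F
  have hscal : lam * (1 - C / (gam * R)) ≤ lam / F := by
    have h1 : gam * R * (F - 1) ≤ F * C := by
      have := (div_le_div_iff₀ hC (by linarith : (0:ℝ) < F - 1)).mp hhigh
      linarith
    have h2 : (F - 1) / F ≤ C / (gam * R) :=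
      (div_le_div_iff₀ hFpos hA).mpr (by nlinarith)
    have h3 : (F - 1) / F = 1 - 1 / F := by field_simp
    have hCA : 1 - 1 / F ≤ C / (gam * R) := by rw [← h3]; exact h2
    have : 1 - C / (gam * R) ≤ 1 / F := by linarith
    calc lam * (1 - C / (gam * R)) ≤ lam * (1 / F) :=
          mul_le_mul_of_nonneg_left this hlam.le
      _ = lam / F := by ring
  refine ⟨fun j => lam * f j / F, fun j => div_nonneg (mul_nonneg hlam.le (fnn j)) hFpos.le, ?_, fun i => ?_⟩
  · rw [← Finset.sum_div, ← Finset.mul_sum, ← hFdef, mul_div_assoc,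
      div_self hFpos.ne', mul_one]
  · have hsum : (1 : ℝ) ≤ f i + ∑ j ∈ univ.erase i, delta i j * f j := by
      have := key i; linarith
    have : lam / F * 1 ≤ lam / F * (f i + ∑ j ∈ univ.erase i, delta i j * f j) :=
      mul_le_mul_of_nonneg_left hsum (by positivity)
    calc lam * (1 - C / (gam * R)) ≤ lam / F := hscal
      _ = lam / F * 1 := (mul_one _).symm
      _ ≤ lam / F * (f i + ∑ j ∈ univ.erase i, delta i j * f j) := this
      _ = lam * f i / F + ∑ j ∈ univ.erase i, delta i j * (lam * f j / F) := by
          rw [mul_add, Finset.mul_sum]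
          congr 1
          · ring
          · exact Finset.sum_congr rfl fun j _ => by ring
end

section
/- Suppose F > 1 and 1 < γR/C ≤ F/(F−1). Set S = λ·(1 − C/(γR))·F, and let β_1,…,β_n ≥ 0 with ∑_{i∈N} β_i = 1. Then the profile defined by λ_i = λ·(1 − C/(γR))·f(T_i,Δ) + β_i·(λ − S) satisfies: λ_i ≥ 0 for all i, ∑_{i∈N} λ_i = λ, and λ_i + ∑_{j∈T_i\{i}} δ_{ij} λ_j ≥ λ·(1 − C/(γR)) for every i ∈ N. -/
open Finset


/-- Suppose `F > 1` and `1 < γR/C ≤ F/(F−1)`. With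
`S = λ·(1 − C/(γR))·F` and weights `β_i ≥ 0`, `∑_i β_i = 1`, the profile
`λ_i = λ·(1 − C/(γR))·f(T_i,Δ) + β_i·(λ − S)` is nonnegative, sums to `λ`, and satisfies
`λ_i + ∑_{j∈T_i\{i}} δ_{ij} λ_j ≥ λ·(1 − C/(γR))` for every `i`. -/
theorem stmt13
    (n : ℕ) (hn : 1 ≤ n)
    (lam R gam C : ℝ) (hlam : 0 < lam) (hR : 0 < R)
    (hgam0 : 0 < gam) (hgam1 : gam < 1) (hC : 0 < C)
    -- the reward sharing matrix Δ
    (delta : Fin n → Fin n → ℝ)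
    (hd0 : ∀ i j, 0 ≤ delta i j) (hd1 : ∀ i j, delta i j < 1)
    (hdiag : ∀ i, delta i i = gam)
    (hcol : ∀ j, ∑ k, delta k j ≤ 1)
    -- `desc i j` means `j` is a strict descendant of `i` in the rooted tree `T`,
    -- i.e. `j ∈ T_i \ {i}`; it is a transitive irreflexive relation on a finite type
    (desc : Fin n → Fin n → Prop)
    (hirr : ∀ i, ¬ desc i i)
    (htrans : ∀ i j k, desc i j → desc j k → desc i k)
    -- `δ_{ij} = 0` whenever `j ∉ T_i`
    (hsupp : ∀ i j, i ≠ j → ¬ desc i j → delta i j = 0)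
    -- the effort sharing function: `f i = f(T_i, Δ) = max{0, 1 − ∑_{j∈T_i\{i}} δ_{ij}·f(T_j,Δ)}`
    (f : Fin n → ℝ)
    (hf : ∀ i, f i = max 0 (1 - ∑ j ∈ univ.erase i, delta i j * f j))
    (hF : 1 < ∑ j, f j)
    (hlow : 1 < gam * R / C)
    (hhigh : gam * R / C ≤ (∑ j, f j) / ((∑ j, f j) - 1))
    (beta : Fin n → ℝ) (hbeta0 : ∀ i, 0 ≤ beta i) (hbeta1 : ∑ i, beta i = 1)
    (S : ℝ) (hS : S = lam * (1 - C / (gam * R)) * ∑ j, f j)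
    (x : Fin n → ℝ)
    (hxdef : ∀ i, x i = lam * (1 - C / (gam * R)) * f i + beta i * (lam - S)) :
    (∀ i, 0 ≤ x i) ∧ (∑ i, x i = lam) ∧
      ∀ i, lam * (1 - C / (gam * R))
            ≤ x i + ∑ j ∈ univ.erase i, delta i j * x j := by
  set F := ∑ j, f j with hFdef
  have hg : 0 < gam * R := mul_pos hgam0 hR
  set D := C / (gam * R) with hDdef
  have hD0 : 0 < D := div_pos hC hg
  have hD1 : D < 1 := by
    rw [hDdef, div_lt_one hg]
    rw [lt_div_iff₀ hC, one_mul] at hlow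
    linarith
  have hF1 : (0:ℝ) < F - 1 := by linarith
  have hFpos : (0:ℝ) < F := by linarith
  -- from hhigh : gam*R/C ≤ F/(F-1), get F - 1 ≤ D * F
  have hhigh' : F - 1 ≤ D * F := by
    have h := hhigh
    rw [div_le_div_iff₀ hC hF1] at h
    have : D * F * C = gam * R * (F - 1) → False ∨ True := fun _ => Or.inr trivial
    have hDC : D * (gam * R) = C := by
      rw [hDdef]; field_simp
    nlinarith [hC, hg]
  set a := lam * (1 - D) with hadef
  have ha : 0 ≤ a := by
    have : 0 ≤ 1 - D := by linarith
    positivity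
  have hfnn : ∀ i, 0 ≤ f i := fun i => (hf i) ▸ le_max_left _ _
  have hlamS : 0 ≤ lam - S := by
    have hcF : (1 - D) * F ≤ 1 := by nlinarith
    have : S ≤ lam := by
      rw [hS]
      calc lam * (1 - D) * F = lam * ((1 - D) * F) := by ring
        _ ≤ lam * 1 := by
            apply mul_le_mul_of_nonneg_left hcF hlam.le
        _ = lam := mul_one lam
    linarith
  have key : ∀ j, a * f j ≤ x j := by
    intro j
    rw [hxdef j]
    have : 0 ≤ beta j * (lam - S) := mul_nonneg (hbeta0 j) hlamS
    nlinarith [hfnn j]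
  refine ⟨fun i => le_trans (mul_nonneg ha (hfnn i)) (key i), ?_, ?_⟩
  · have : ∑ i, x i = a * F + (∑ i, beta i) * (lam - S) := by
      simp_rw [hxdef]
      rw [Finset.sum_add_distrib, ← Finset.mul_sum, ← Finset.sum_mul]
    rw [this, hbeta1, hS]
    ring
  · intro i
    have hfi : 1 - ∑ j ∈ univ.erase i, delta i j * f j ≤ f i :=
      (hf i) ▸ le_max_right _ _
    set s := ∑ j ∈ univ.erase i, delta i j * f j with hsdef
    have h1 : a * s ≤ ∑ j ∈ univ.erase i, delta i j * x j := by
      rw [hsdef, Finset.mul_sum]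
      apply Finset.sum_le_sum
      intro j _
      calc a * (delta i j * f j) = delta i j * (a * f j) := by ring
        _ ≤ delta i j * x j := mul_le_mul_of_nonneg_left (key j) (hd0 i j)
    have h2 : a * (1 - s) ≤ x i :=
      le_trans (mul_le_mul_of_nonneg_left hfi ha) (key i)
    have hring : a * (1 - s) = a - a * s := by ring
    linarith
end

section
/- Suppose γR > C. Then no pure strategy Nash equilibrium λ* satisfies ∑_{j∈N} λ_j* < λ (i.e., no PSNE lies in Zone 1). -/
open Finset

/-- Suppose `γR > C`. Then no PSNE satisfies `∑_j λ_j* < λ`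
(no PSNE lies in Zone 1). -/
theorem stmt16
    (n : ℕ) (hn : 1 ≤ n)
    (lam R gam C : ℝ) (hlam : 0 < lam) (hR : 0 < R)
    (hgam0 : 0 < gam) (hgam1 : gam < 1) (hC : 0 < C)
    -- the reward sharing matrix Δ
    (delta : Fin n → Fin n → ℝ)
    (hd0 : ∀ i j, 0 ≤ delta i j) (hd1 : ∀ i j, delta i j < 1)
    (hdiag : ∀ i, delta i i = gam)
    (hcol : ∀ j, ∑ k, delta k j ≤ 1)
    -- `desc i j` means `j` is a strict descendant of `i` in the rooted tree `T`,
    -- i.e. `j ∈ T_i \ {i}`; it is a transitive irreflexive relation on a finite type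
    (desc : Fin n → Fin n → Prop)
    (hirr : ∀ i, ¬ desc i i)
    (htrans : ∀ i j k, desc i j → desc j k → desc i k)
    -- `δ_{ij} = 0` whenever `j ∉ T_i`
    (hsupp : ∀ i j, i ≠ j → ¬ desc i j → delta i j = 0)
    (h : C < gam * R)
    (x : Fin n → ℝ) (hx : IsPSNE lam R gam C delta x) :
    ¬ (∑ j, x j < lam) := by
  intro hS
  obtain ⟨hx0, hne⟩ := hx
  have i : Fin n := ⟨0, hn⟩
  set S := ∑ j, x j with hSdef
  have hxiS : x i ≤ S := Finset.single_le_sum (f := x) (fun j _ => hx0 j) (Finset.mem_univ i)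
  set y : ℝ := x i + (lam - S) with hy
  have hy0 : 0 ≤ y := by
    have := hx0 i
    nlinarith
  have hsum : ∑ k, Function.update x i y k = lam := by
    rw [Finset.sum_update_of_mem (Finset.mem_univ i), Finset.sdiff_singleton_eq_erase]
    have : ∑ k ∈ Finset.univ.erase i, x k = S - x i := by
      have := Finset.add_sum_erase Finset.univ x (Finset.mem_univ i)
      linarith [this]
    rw [this, hy]; ring
  have hrest : ∑ j ∈ Finset.univ.erase i, delta i j * Function.update x i y j
      = ∑ j ∈ Finset.univ.erase i, delta i j * x j := by
    refine Finset.sum_congr rfl fun j hj => ?_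
    rw [Function.update_of_ne (Finset.ne_of_mem_erase hj)]
  have key := hne i y hy0
  rw [u, u, hsum, if_neg (lt_irrefl lam), if_neg (not_lt.mpr hS.le), u2, u2, hrest] at key
  rw [Function.update_self] at key
  nlinarith [key]
end

section
/- Suppose F > 1 and 1 < γR/C ≤ F/(F−1) (region R3). Then no pure strategy Nash equilibrium λ* satisfies ∑_{j∈N} λ_j* > λ (i.e., no PSNE lies in Zone 4). -/
open Finset

lemma maxsub (a b : ℝ) : max 0 a - max 0 b ≤ max 0 (a - b) := by
  rw [sub_le_iff_le_add]
  apply max_le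
  · have h1 : (0:ℝ) ≤ max 0 (a-b) := le_max_left _ _
    have h2 : (0:ℝ) ≤ max 0 b := le_max_left _ _
    linarith
  · have h1 : a - b ≤ max 0 (a-b) := le_max_right _ _
    have h2 : b ≤ max 0 b := le_max_right _ _
    linarith

/-- Suppose `F > 1` and `1 < γR/C ≤ F/(F−1)` (region R3). Then no PSNE
satisfies `∑_j λ_j* > λ` (no PSNE lies in Zone 4). -/
theorem stmt17
    (n : ℕ) (hn : 1 ≤ n)
    (lam R gam C : ℝ) (hlam : 0 < lam) (hR : 0 < R)
    (hgam0 : 0 < gam) (hgam1 : gam < 1) (hC : 0 < C)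
    -- the reward sharing matrix Δ
    (delta : Fin n → Fin n → ℝ)
    (hd0 : ∀ i j, 0 ≤ delta i j) (hd1 : ∀ i j, delta i j < 1)
    (hdiag : ∀ i, delta i i = gam)
    (hcol : ∀ j, ∑ k, delta k j ≤ 1)
    -- `desc i j` means `j` is a strict descendant of `i` in the rooted tree `T`,
    -- i.e. `j ∈ T_i \ {i}`; it is a transitive irreflexive relation on a finite type
    (desc : Fin n → Fin n → Prop)
    (hirr : ∀ i, ¬ desc i i)
    (htrans : ∀ i j k, desc i j → desc j k → desc i k)
    -- `δ_{ij} = 0` whenever `j ∉ T_i`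
    (hsupp : ∀ i j, i ≠ j → ¬ desc i j → delta i j = 0)
    -- the effort sharing function: `f i = f(T_i, Δ) = max{0, 1 − ∑_{j∈T_i\{i}} δ_{ij}·f(T_j,Δ)}`
    (f : Fin n → ℝ)
    (hf : ∀ i, f i = max 0 (1 - ∑ j ∈ univ.erase i, delta i j * f j))
    (hF : 1 < ∑ j, f j)
    (hlow : 1 < gam * R / C)
    (hhigh : gam * R / C ≤ (∑ j, f j) / ((∑ j, f j) - 1))
    (x : Fin n → ℝ) (hx : IsPSNE lam R gam C delta x) :
    ¬ (lam < ∑ j, x j) := by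
  intro hS
  obtain ⟨hx0, hbr⟩ := hx
  set S := ∑ j, x j with hSdef
  have hS0 : 0 < S := lt_trans hlam hS
  have hlr : (0:ℝ) < lam * R := mul_pos hlam hR
  -- Step 1: key FOC inequality for every agent
  have hkey : ∀ i : Fin n, gam * x i ≤
      max 0 (gam * S - C * S^2 / (lam * R) - ∑ j ∈ univ.erase i, delta i j * x j) := by
    intro i
    rcases (hx0 i).lt_or_eq with hxi | hxi
    · -- active agent
      set D := ∑ j ∈ univ.erase i, delta i j * x j with hDdef
      suffices h : gam * x i + D ≤ gam * S - C * S^2 / (lam * R) by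
        have h2 : 0 ≤ D := Finset.sum_nonneg fun j _ => mul_nonneg (hd0 i j) (hx0 j)
        have : gam * x i ≤ gam * S - C * S^2 / (lam * R) - D := by linarith
        exact this.trans (le_max_right 0 _)
      by_contra hcon
      push_neg at hcon
      have hA : (gam * (S - x i) - D) * (lam * R) < C * S^2 :=
        (lt_div_iff₀ hlr).mp (by linarith)
      have hCS : 0 < C * S := mul_pos hC hS0
      obtain ⟨ε, hε, hε1, hε2, hε3'⟩ : ∃ ε : ℝ, 0 < ε ∧ ε ≤ x i / 2 ∧ ε ≤ (S - lam)/2 ∧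
          ε * (2*(C*S)) ≤ C*S^2 - (gam*(S - x i) - D)*(lam*R) := by
        refine ⟨min (x i / 2) (min ((S - lam)/2)
            ((C*S^2 - (gam*(S - x i) - D)*(lam*R))/(2*(C*S)))),
          lt_min (by linarith) (lt_min (by linarith)
            (div_pos (by linarith) (by linarith))),
          min_le_left _ _, le_trans (min_le_right _ _) (min_le_left _ _), ?_⟩
        rw [← le_div_iff₀ (by linarith : (0:ℝ) < 2*(C*S))]
        exact le_trans (min_le_right _ _) (min_le_right _ _)
      have hy0 : 0 ≤ x i - ε := by linarith
      have hS'l : lam < S - ε := by linarith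
      have hS'0 : 0 < S - ε := by linarith
      have hcs : (gam*(S - x i) - D)*(lam*R) < C*S*(S-ε) := by
        have hexp : C*S*(S-ε) = C*S^2 - (C*S)*ε := by ring
        have hp := mul_pos hCS hε
        linarith
      have herase : ∑ k ∈ univ.erase i, x k = S - x i := by
        have h := Finset.sum_erase_add univ x (Finset.mem_univ i)
        rw [← hSdef] at h
        linarith
      have hsum_upd : ∑ k, Function.update x i (x i - ε) k = S - ε := by
        rw [Finset.sum_update_of_mem (Finset.mem_univ i), ← Finset.erase_eq, herase]
        ring
      have hD_upd : ∑ j ∈ univ.erase i, delta i j * Function.update x i (x i - ε) j = D := by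
        rw [hDdef]
        exact Finset.sum_congr rfl fun j hj => by
          rw [Function.update_of_ne (Finset.ne_of_mem_erase hj)]
      have hub := hbr i (x i - ε) hy0
      have e1 : u lam R gam C delta x i
          = lam * gam * R * x i / S + lam * R * D / S - C * x i := by
        simp only [u, u1]
        rw [if_pos (show lam < ∑ k, x k by rw [← hSdef]; exact hS), ← hSdef, ← hDdef]
      have e2 : u lam R gam C delta (Function.update x i (x i - ε)) i
          = lam * gam * R * (x i - ε) / (S - ε) + lam * R * D / (S - ε) - C * (x i - ε) := by
        simp only [u, u1]
        rw [if_pos (show lam < ∑ k, Function.update x i (x i - ε) k by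
              rw [hsum_upd]; exact hS'l),
          hsum_upd, hD_upd, Function.update_self]
      rw [e1, e2] at hub
      have l1 : lam * gam * R * x i / S + lam * R * D / S
          = (lam * R * (gam * x i + D)) / S := by ring
      have l2 : lam * gam * R * (x i - ε) / (S - ε) + lam * R * D / (S - ε)
          = (lam * R * (gam * (x i - ε) + D)) / (S - ε) := by ring
      rw [l1, l2] at hub
      have hd2 : (lam*R*(gam*x i + D))/S - (lam*R*(gam*(x i - ε) + D))/(S-ε) < C*ε := by
        rw [div_sub_div _ _ hS0.ne' hS'0.ne', div_lt_iff₀ (by positivity : (0:ℝ) < S*(S-ε))]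
        calc lam*R*(gam*x i + D)*(S-ε) - S*(lam*R*(gam*(x i - ε) + D))
            = ε * ((gam*(S - x i) - D)*(lam*R)) := by ring
          _ < ε * (C*S*(S-ε)) := mul_lt_mul_of_pos_left hcs hε
          _ = C*ε*(S*(S-ε)) := by ring
      linarith
    · -- inactive agent
      rw [← hxi, mul_zero]
      exact le_max_left 0 _
  set K := gam * S - C * S^2 / (lam * R) with hKdef
  -- Step 2: K > 0
  obtain ⟨i0, hi0⟩ : ∃ j, 0 < x j := by
    by_contra hno
    push_neg at hno
    have : S = 0 := by
      rw [hSdef]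
      exact Finset.sum_eq_zero fun j _ => le_antisymm (hno j) (hx0 j)
    linarith
  have hKpos : 0 < K := by
    have h1 := hkey i0
    have h2 : 0 < gam * x i0 := mul_pos hgam0 hi0
    have h3 : (0:ℝ) < max 0 (K - ∑ j ∈ univ.erase i0, delta i0 j * x j) :=
      lt_of_lt_of_le h2 h1
    have h4 : 0 < K - ∑ j ∈ univ.erase i0, delta i0 j * x j := by
      by_contra h
      push_neg at h
      rw [max_eq_left h] at h3
      exact lt_irrefl 0 h3
    have h5 : 0 ≤ ∑ j ∈ univ.erase i0, delta i0 j * x j :=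
      Finset.sum_nonneg fun j _ => mul_nonneg (hd0 i0 j) (hx0 j)
    linarith
  -- Step 3: comparison with K * f
  set d : Fin n → ℝ := fun j => max 0 (K * f j - gam * x j) with hddef
  set e : Fin n → ℝ := fun j => max 0 (gam * x j - K * f j) with hedef
  have hdj : ∀ j, d j = max 0 (K * f j - gam * x j) := fun j => rfl
  have hej : ∀ j, e j = max 0 (gam * x j - K * f j) := fun j => rfl
  have hd_nn : ∀ j, 0 ≤ d j := fun j => le_max_left _ _
  have hmono : ∀ i : Fin n,
      max 0 (K - ∑ j ∈ univ.erase i, delta i j * x j)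
        ≤ max 0 (K - ∑ j ∈ univ.erase i, delta i j * (gam * x j)) := by
    intro i
    apply max_le_max le_rfl
    apply sub_le_sub_left
    apply Finset.sum_le_sum
    intro j hj
    have h1 : gam * x j ≤ x j := by nlinarith [hx0 j]
    exact mul_le_mul_of_nonneg_left h1 (hd0 i j)
  have hKf : ∀ i : Fin n, K * f i
      = max 0 (K - ∑ j ∈ univ.erase i, delta i j * (K * f j)) := by
    intro i
    have heq : K - ∑ j ∈ univ.erase i, delta i j * (K * f j)
        = K * (1 - ∑ j ∈ univ.erase i, delta i j * f j) := by
      rw [mul_sub, mul_one, Finset.mul_sum]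
      congr 1
      exact Finset.sum_congr rfl fun j _ => by ring
    rw [heq, hf i]
    rcases le_total (1 - ∑ j ∈ univ.erase i, delta i j * f j) 0 with h | h
    · rw [max_eq_left h, mul_zero,
        max_eq_left (mul_nonpos_of_nonneg_of_nonpos hKpos.le h)]
    · rw [max_eq_right h, max_eq_right (mul_nonneg hKpos.le h)]
  have hstep : ∀ i : Fin n, gam * x i - K * f i ≤ ∑ j ∈ univ.erase i, delta i j * d j := by
    intro i
    have c1 : gam * x i - K * f i ≤
        max 0 (K - ∑ j ∈ univ.erase i, delta i j * (gam * x j))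
          - max 0 (K - ∑ j ∈ univ.erase i, delta i j * (K * f j)) :=
      sub_le_sub ((hkey i).trans (hmono i)) (le_of_eq (hKf i).symm)
    have c2 : (K - ∑ j ∈ univ.erase i, delta i j * (gam * x j))
        - (K - ∑ j ∈ univ.erase i, delta i j * (K * f j))
        = ∑ j ∈ univ.erase i, (delta i j * (K * f j) - delta i j * (gam * x j)) := by
      rw [Finset.sum_sub_distrib]
      ring
    have c3 : ∑ j ∈ univ.erase i, (delta i j * (K * f j) - delta i j * (gam * x j))
        ≤ ∑ j ∈ univ.erase i, delta i j * d j := by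
      apply Finset.sum_le_sum
      intro j hj
      have : delta i j * (K * f j) - delta i j * (gam * x j)
          = delta i j * (K * f j - gam * x j) := by ring
      rw [this, hdj j]
      exact mul_le_mul_of_nonneg_left (le_max_right _ _) (hd0 i j)
    have c4 : 0 ≤ ∑ j ∈ univ.erase i, delta i j * d j :=
      Finset.sum_nonneg fun j _ => mul_nonneg (hd0 i j) (hd_nn j)
    calc gam * x i - K * f i
        ≤ _ := c1
      _ ≤ max 0 ((K - ∑ j ∈ univ.erase i, delta i j * (gam * x j))
            - (K - ∑ j ∈ univ.erase i, delta i j * (K * f j))) := maxsub _ _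
      _ ≤ max 0 (∑ j ∈ univ.erase i, delta i j * d j) := by
            rw [c2]; exact max_le_max le_rfl c3
      _ = ∑ j ∈ univ.erase i, delta i j * d j := max_eq_right c4
  have he_bound : ∀ i : Fin n, e i ≤ ∑ j ∈ univ.erase i, delta i j * d j := by
    intro i
    rw [hej i]
    exact max_le (Finset.sum_nonneg fun j _ => mul_nonneg (hd0 i j) (hd_nn j)) (hstep i)
  -- Step 4: summation
  have hsum_e : ∑ i, e i ≤ (1 - gam) * ∑ j, d j := by
    calc ∑ i, e i ≤ ∑ i, ∑ j ∈ univ.erase i, delta i j * d j :=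
          Finset.sum_le_sum fun i _ => he_bound i
      _ = ∑ i, ((∑ j, delta i j * d j) - gam * d i) := by
          apply Finset.sum_congr rfl
          intro i _
          have h2 : (∑ j ∈ univ.erase i, delta i j * d j) + gam * d i
              = ∑ j, delta i j * d j := by
            have h0 := Finset.sum_erase_add univ (fun j => delta i j * d j)
              (Finset.mem_univ i)
            simpa [hdiag i] using h0
          linarith
      _ = (∑ i, ∑ j, delta i j * d j) - gam * ∑ i, d i := by
          rw [Finset.sum_sub_distrib, ← Finset.mul_sum]
      _ = (∑ j, (∑ i, delta i j) * d j) - gam * ∑ i, d i := by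
          rw [Finset.sum_comm]
          congr 1
          exact Finset.sum_congr rfl fun j _ => (Finset.sum_mul _ _ _).symm
      _ ≤ (∑ j, 1 * d j) - gam * ∑ i, d i := by
          apply sub_le_sub_right
          exact Finset.sum_le_sum fun j _ => mul_le_mul_of_nonneg_right (hcol j) (hd_nn j)
      _ = (1 - gam) * ∑ j, d j := by
          simp only [one_mul]
          ring
  have hed : ∀ i : Fin n, gam * x i - K * f i = e i - d i := by
    intro i
    rw [hej i, hdj i]
    rcases le_total (gam * x i - K * f i) 0 with h | h
    · rw [max_eq_left h, max_eq_right (by linarith : (0:ℝ) ≤ K * f i - gam * x i)]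
      ring
    · rw [max_eq_right h, max_eq_left (by linarith : K * f i - gam * x i ≤ (0:ℝ))]
      ring
  have hdsum_nn : 0 ≤ ∑ j, d j := Finset.sum_nonneg fun j _ => hd_nn j
  have hfin : gam * S ≤ K * ∑ j, f j := by
    have h1 : ∑ i, (gam * x i - K * f i) = gam * S - K * ∑ j, f j := by
      rw [Finset.sum_sub_distrib, ← Finset.mul_sum, ← Finset.mul_sum, ← hSdef]
    have h2 : ∑ i, (gam * x i - K * f i) = (∑ i, e i) - ∑ i, d i := by
      rw [← Finset.sum_sub_distrib]
      exact Finset.sum_congr rfl fun i _ => hed i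
    have h3 : 0 ≤ gam * ∑ j, d j := mul_nonneg hgam0.le hdsum_nn
    nlinarith [hsum_e]
  -- Step 5: final arithmetic contradiction
  set Fs := ∑ j, f j with hFs
  have hF1 : (0:ℝ) < Fs - 1 := by linarith
  have hcross : gam * R * (Fs - 1) ≤ Fs * C := by
    have h := hhigh
    rw [div_le_div_iff₀ hC hF1] at h
    exact h
  have hQ : C*S^2/(lam*R)*(lam*R) = C*S^2 := div_mul_cancel₀ _ hlr.ne'
  rw [hKdef] at hfin
  have h1 : gam*S*(lam*R) ≤ (gam*S - C*S^2/(lam*R))*Fs*(lam*R) := by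
    calc gam*S*(lam*R) ≤ ((gam*S - C*S^2/(lam*R))*Fs)*(lam*R) :=
          mul_le_mul_of_nonneg_right hfin hlr.le
      _ = (gam*S - C*S^2/(lam*R))*Fs*(lam*R) := by ring
  have h2 : (gam*S - C*S^2/(lam*R))*Fs*(lam*R) = gam*S*Fs*(lam*R) - C*S^2*Fs := by
    linear_combination (-Fs) * hQ
  have h3 : C*S^2*Fs ≤ gam*S*Fs*(lam*R) - gam*S*(lam*R) := by
    rw [h2] at h1
    linarith
  have h4 : gam*R*(Fs-1)*(lam*S) ≤ Fs*C*(lam*S) :=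
    mul_le_mul_of_nonneg_right hcross (by positivity)
  have h5 : 0 < C*S*Fs*(S - lam) := by
    apply mul_pos
    · apply mul_pos (mul_pos hC hS0); linarith
    · linarith
  nlinarith [h3, h4, h5]
end
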